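/- arXiv:1912.06106 — 2 statements merged into one kernel-verified Lean document; each statement's English description precedes it below -/
import Mathlib

section
/- Let n ≥ 1, let S be a symmetric positive definite real n×n matrix, and let C ⊆ ℝⁿ be a nonempty closed convex set with 0 ∈ C. Then: (i) for every z ∈ ℝⁿ the function q ↦ ⟨S⁻¹(q − S z), q − S z⟩ has a unique minimizer p(z) over C; (ii) for every z ∈ ℝⁿ, ψ(z) = ½ ⟨S z, z⟩ − ½ ⟨S⁻¹(p(z) − S z), p(z) − S z⟩; (iii) the map z ↦ p(z) is Lipschitz continuous on ℝⁿ; and (iv) ψ is differentiable at every z ∈ ℝⁿ with gradient ∇ψ(z) = p(z). -/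
open Matrix
open scoped RealInnerProductSpace

/-- The support function `h(z) = sup_{q ∈ C} ⟨q, z⟩`, with values in `[0, +∞]` (extended reals). -/
noncomputable def hsupp {n : ℕ} (C : Set (EuclideanSpace ℝ (Fin n)))
    (z : EuclideanSpace ℝ (Fin n)) : EReal :=
  ⨆ q ∈ C, ((⟪q, z⟫ : ℝ) : EReal)

/-- The infimal convolution
`ψ(z) = inf_{z'} { ½ ⟨S(z - z'), z - z'⟩ + h(z') }`. -/
noncomputable def psi {n : ℕ} (S : Matrix (Fin n) (Fin n) ℝ)
    (C : Set (EuclideanSpace ℝ (Fin n))) (z : EuclideanSpace ℝ (Fin n)) : EReal :=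
  ⨅ z' : EuclideanSpace ℝ (Fin n),
    (((2⁻¹ * ⟪Matrix.toEuclideanLin S (z - z'), z - z'⟫ : ℝ) : EReal) + hsupp C z')

open Filter Topology Set Asymptotics

/-!
Completing the square, `⟪S⁻¹ (q - S z), q - S z⟫ = ⟪S z, z⟫ - 2 (⟪q, z⟫ - ½ ⟪S⁻¹ q, q⟫)`, so
`p z` is the maximiser over `C` of the strongly concave `q ↦ ⟪q, z⟫ - ½ ⟪S⁻¹ q, q⟫`. It exists by
coercivity and satisfies the variational inequality `⟪z - S⁻¹ p z, q - p z⟫ ≤ 0` on `C`; adding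
the inequalities at `z₁` and `z₂` makes `p` Lipschitz. The inequality also says that the infimum
defining `ψ z` is attained at `z' = z - S⁻¹ p z`, while the Fenchel–Young inequality
`⟪p, u⟫ ≤ ½ ⟪S u, u⟫ + ½ ⟪S⁻¹ p, p⟫` bounds it below by the same value. Hence `ψ` is the
pointwise maximum over `q ∈ C` of affine functions with slopes `q`, attained at the continuous
selection `p`, and such a maximum is differentiable with gradient `p` (Danskin).
-/

section InnerProductSpace

variable {E : Type*} [NormedAddCommGroup E] [InnerProductSpace ℝ E]

lemma LinearMap.exists_pos_mul_sq_le_inner [FiniteDimensional ℝ E] {T : E →ₗ[ℝ] E}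
    (hT : ∀ x ≠ 0, 0 < ⟪T x, x⟫) : ∃ c, 0 < c ∧ ∀ x, c * ‖x‖ ^ 2 ≤ ⟪T x, x⟫ := by
  have hcont : Continuous fun x => ⟪T x, x⟫ :=
    T.continuous_of_finiteDimensional.inner continuous_id
  obtain ⟨c, hc, hcS⟩ := (isCompact_sphere (0 : E) 1).exists_forall_le' hcont.continuousOn
    fun x hx => hT x (ne_zero_of_mem_unit_sphere ⟨x, hx⟩)
  refine ⟨c, hc, fun x => ?_⟩
  rcases eq_or_ne x 0 with rfl | hx
  · simp
  have hx' : 0 < ‖x‖ := norm_pos_iff.mpr hx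
  have hunit := hcS (‖x‖⁻¹ • x) (by simp [norm_smul, hx])
  rw [map_smul, real_inner_smul_left, real_inner_smul_right] at hunit
  calc c * ‖x‖ ^ 2 ≤ ‖x‖⁻¹ * (‖x‖⁻¹ * ⟪T x, x⟫) * ‖x‖ ^ 2 := by gcongr
    _ = ⟪T x, x⟫ := by field_simp

lemma hasGradientAt_of_isMaxOn [CompleteSpace E] {C : Set E} {k : E → ℝ} {p : E → E}
    (hpC : ∀ y, p y ∈ C) (hmax : ∀ y, IsMaxOn (fun q => ⟪q, y⟫ - k q) C (p y)) {z : E}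
    (hp : ContinuousAt p z) :
    HasGradientAt (fun y => ⟪p y, y⟫ - k (p y)) (p z) z := by
  have hsmall : (fun y => ‖p y - p z‖ * ‖y - z‖) =o[𝓝 z] fun y => y - z := by
    have hto : Tendsto (fun y => ‖p y - p z‖) (𝓝 z) (𝓝 0) := by
      simpa using (tendsto_sub_nhds_zero_iff.mpr hp).norm
    simpa using (((isLittleO_one_iff ℝ).mpr hto).mul_isBigO
      (isBigO_refl (fun y => ‖y - z‖) (𝓝 z))).norm_right
  rw [hasGradientAt_iff_isLittleO]
  refine IsBigO.trans_isLittleO (IsBigO.of_bound 1 (Eventually.of_forall fun y => ?_)) hsmall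
  have lower : ⟪p z, y⟫ - k (p z) ≤ ⟪p y, y⟫ - k (p y) := hmax y (hpC z)
  have upper : ⟪p y, z⟫ - k (p y) ≤ ⟪p z, z⟫ - k (p z) := hmax z (hpC y)
  have hcs := real_inner_le_norm (p y - p z) (y - z)
  simp only [inner_sub_left, inner_sub_right] at hcs ⊢
  rw [Real.norm_eq_abs, Real.norm_of_nonneg (by positivity), one_mul, abs_le]
  constructor <;> linarith [mul_nonneg (norm_nonneg (p y - p z)) (norm_nonneg (y - z))]

/-- `ψ z` is the maximum of `dualObjective S⁻¹ z` over `C`: `ψ` is the convex conjugate of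
`½ ⟪S⁻¹ ·, ·⟫ + ι_C`. -/
noncomputable def dualObjective (B : E →ₗ[ℝ] E) (z q : E) : ℝ := ⟪q, z⟫ - 2⁻¹ * ⟪B q, q⟫

variable {B : E →ₗ[ℝ] E} {C : Set E}

lemma dualObjective_add (hB : B.IsSymmetric) (z p v : E) :
    dualObjective B z (p + v) = dualObjective B z p + ⟪z - B p, v⟫ - 2⁻¹ * ⟪B v, v⟫ := by
  simp only [dualObjective, map_add, inner_add_left, inner_add_right, inner_sub_left, hB v p,
    real_inner_comm v (B p), real_inner_comm v z]
  ring

lemma inner_map_sub_sub_eq_sub_dualObjective (hB : B.IsSymmetric) (w q : E) :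
    ⟪B (q - w), q - w⟫ = ⟪B w, w⟫ - 2 * dualObjective B (B w) q := by
  simp only [dualObjective, map_sub, inner_sub_left, inner_sub_right, hB q w, real_inner_comm q]
  ring

lemma exists_isMaxOn_dualObjective [FiniteDimensional ℝ E] {c : ℝ} (hc : 0 < c)
    (hBc : ∀ x, c * ‖x‖ ^ 2 ≤ ⟪B x, x⟫) (hCcl : IsClosed C) (hCne : C.Nonempty) (z : E) :
    ∃ p ∈ C, IsMaxOn (dualObjective B z) C p := by
  obtain ⟨q₀, hq₀⟩ := hCne
  have hcont : Continuous (dualObjective B z) :=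
    (continuous_id.inner continuous_const).sub
      (continuous_const.mul (B.continuous_of_finiteDimensional.inner continuous_id))
  have hbound : ∀ q, dualObjective B z q ≤ ‖q‖ * (‖z‖ - 2⁻¹ * c * ‖q‖) := fun q => by
    have hcoer := hBc q
    have hcs := real_inner_le_norm q z
    unfold dualObjective
    linarith
  have hlim : Tendsto (dualObjective B z) (cocompact E) atBot := by
    refine tendsto_atBot_mono hbound
      ((?_ : Tendsto (fun t : ℝ => t * (‖z‖ - 2⁻¹ * c * t)) atTop atBot).comp
        tendsto_norm_cocompact_atTop)
    have hlin : Tendsto (fun t : ℝ => ‖z‖ - 2⁻¹ * c * t) atTop atBot := by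
      simpa [sub_eq_add_neg, neg_mul] using tendsto_atBot_add_const_left atTop ‖z‖
        (tendsto_id.const_mul_atTop_of_neg (neg_neg_of_pos (by positivity : 0 < 2⁻¹ * c)))
    exact tendsto_id.atTop_mul_atBot₀ hlin
  exact hcont.continuousOn.exists_isMaxOn' hCcl hq₀
    ((hlim.eventually_le_atBot (dualObjective B z q₀)).filter_mono inf_le_left)

lemma inner_sub_map_le_zero_of_isMaxOn (hB : B.IsSymmetric) (hCco : Convex ℝ C) {z p q : E}
    (hp : p ∈ C) (hmax : IsMaxOn (dualObjective B z) C p) (hq : q ∈ C) :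
    ⟪z - B p, q - p⟫ ≤ 0 := by
  have hsmall : ∀ t ∈ Ioo (0 : ℝ) 1, ⟪z - B p, q - p⟫ ≤ 2⁻¹ * t * ⟪B (q - p), q - p⟫ := by
    rintro t ⟨ht₀, ht₁⟩
    have hmove : dualObjective B z (p + t • (q - p)) ≤ dualObjective B z p :=
      hmax (hCco.add_smul_sub_mem hp hq ⟨ht₀.le, ht₁.le⟩)
    rw [dualObjective_add hB, map_smul, real_inner_smul_left, real_inner_smul_right,
      real_inner_smul_right] at hmove
    nlinarith
  have hlim : Tendsto (fun t => 2⁻¹ * t * ⟪B (q - p), q - p⟫) (𝓝[>] 0) (𝓝 0) := by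
    have : Continuous fun t : ℝ => 2⁻¹ * t * ⟪B (q - p), q - p⟫ := by fun_prop
    simpa using this.continuousWithinAt.tendsto (x := 0) (s := Ioi 0)
  exact ge_of_tendsto hlim (eventually_of_mem (Ioo_mem_nhdsGT one_pos) hsmall)

lemma eq_of_dualObjective_eq (hB : B.IsSymmetric) (hBpos : ∀ x ≠ 0, 0 < ⟪B x, x⟫) {z p q : E}
    (hVI : ⟪z - B p, q - p⟫ ≤ 0) (heq : dualObjective B z q = dualObjective B z p) : q = p := by
  have hexp := dualObjective_add hB z p (q - p)
  rw [add_sub_cancel, heq] at hexp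
  by_contra hne
  linarith [hBpos (q - p) (sub_ne_zero.mpr hne)]

lemma lipschitzWith_of_inner_sub_map_le_zero {c : ℝ} (hc : 0 < c)
    (hBc : ∀ x, c * ‖x‖ ^ 2 ≤ ⟪B x, x⟫) {p : E → E} (hpC : ∀ z, p z ∈ C)
    (hVI : ∀ z, ∀ q ∈ C, ⟪z - B (p z), q - p z⟫ ≤ 0) : LipschitzWith (Real.toNNReal c⁻¹) p := by
  refine LipschitzWith.of_dist_le' fun z₁ z₂ => ?_
  rw [dist_eq_norm, dist_eq_norm, le_inv_mul_iff₀ hc]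
  rcases eq_or_ne (p z₁) (p z₂) with heq | hne
  · simp [heq]
  have hmono : c * ‖p z₁ - p z₂‖ ^ 2 ≤ ⟪z₁ - z₂, p z₁ - p z₂⟫ := by
    have h₁ := hVI z₁ (p z₂) (hpC z₂)
    have h₂ := hVI z₂ (p z₁) (hpC z₁)
    have := hBc (p z₁ - p z₂)
    simp only [map_sub, inner_sub_left, inner_sub_right] at h₁ h₂ this ⊢
    linarith
  have hpos : 0 < ‖p z₁ - p z₂‖ := norm_pos_iff.mpr (sub_ne_zero.mpr hne)
  nlinarith [real_inner_le_norm (z₁ - z₂) (p z₁ - p z₂)]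

lemma inner_le_half_inner_add_half_inner {A : E →ₗ[ℝ] E} (hA : A.IsPositive)
    (hAB : ∀ x, A (B x) = x) (u p : E) : ⟪p, u⟫ ≤ 2⁻¹ * ⟪A u, u⟫ + 2⁻¹ * ⟪B p, p⟫ := by
  have h := hA.inner_nonneg_left (u - B p)
  simp only [map_sub, inner_sub_left, inner_sub_right, hAB, hA.isSymmetric u (B p),
    real_inner_comm p u, real_inner_comm (B p) p] at h
  linarith

end InnerProductSpace

namespace Matrix

variable {ι : Type*} [Fintype ι] [DecidableEq ι] {M : Matrix ι ι ℝ}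

lemma PosDef.inner_toEuclideanLin_self_pos (hM : M.PosDef) {x : EuclideanSpace ℝ ι}
    (hx : x ≠ 0) : 0 < ⟪toEuclideanLin M x, x⟫ := by
  simpa [EuclideanSpace.inner_eq_star_dotProduct] using
    hM.dotProduct_mulVec_pos (x := x.ofLp) (by simpa using hx)

lemma toEuclideanLin_nonsing_inv_apply (hM : IsUnit M.det) (x : EuclideanSpace ℝ ι) :
    toEuclideanLin M⁻¹ (toEuclideanLin M x) = x := by
  apply (WithLp.equiv 2 (ι → ℝ)).injective
  simp [mulVec_mulVec, nonsing_inv_mul _ hM]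

lemma toEuclideanLin_apply_nonsing_inv (hM : IsUnit M.det) (x : EuclideanSpace ℝ ι) :
    toEuclideanLin M (toEuclideanLin M⁻¹ x) = x := by
  apply (WithLp.equiv 2 (ι → ℝ)).injective
  simp [mulVec_mulVec, mul_nonsing_inv _ hM]

end Matrix

lemma inner_le_hsupp {n : ℕ} {C : Set (EuclideanSpace ℝ (Fin n))} {q : EuclideanSpace ℝ (Fin n)}
    (hq : q ∈ C) (z : EuclideanSpace ℝ (Fin n)) : ((⟪q, z⟫ : ℝ) : EReal) ≤ hsupp C z :=
  le_iSup₂ (f := fun q (_ : q ∈ C) => ((⟪q, z⟫ : ℝ) : EReal)) q hq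

lemma hsupp_le {n : ℕ} {C : Set (EuclideanSpace ℝ (Fin n))} {z : EuclideanSpace ℝ (Fin n)}
    {r : ℝ} (h : ∀ q ∈ C, ⟪q, z⟫ ≤ r) : hsupp C z ≤ r :=
  iSup₂_le fun q hq => EReal.coe_le_coe_iff.mpr (h q hq)

lemma psi_eq_dualObjective {n : ℕ} {S : Matrix (Fin n) (Fin n) ℝ} (hS : S.PosDef)
    {C : Set (EuclideanSpace ℝ (Fin n))} {z p : EuclideanSpace ℝ (Fin n)} (hp : p ∈ C)
    (hVI : ∀ q ∈ C, ⟪z - toEuclideanLin S⁻¹ p, q - p⟫ ≤ 0) :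
    psi S C z = dualObjective (toEuclideanLin S⁻¹) z p := by
  set B := toEuclideanLin S⁻¹
  have hdet : IsUnit S.det := (isUnit_iff_isUnit_det S).mp hS.isUnit
  apply le_antisymm
  · have hsupp_le_inner : hsupp C (z - B p) ≤ (⟪p, z - B p⟫ : ℝ) := hsupp_le fun q hq => by
      have := hVI q hq
      rw [real_inner_comm, inner_sub_left] at this
      linarith
    calc psi S C z
        ≤ ((2⁻¹ * ⟪toEuclideanLin S (z - (z - B p)), z - (z - B p)⟫ : ℝ) : EReal)
          + hsupp C (z - B p) := iInf_le _ (z - B p)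
      _ ≤ ((2⁻¹ * ⟪toEuclideanLin S (z - (z - B p)), z - (z - B p)⟫ : ℝ) : EReal)
          + ((⟪p, z - B p⟫ : ℝ) : EReal) := by gcongr
      _ = dualObjective B z p := by
        rw [← EReal.coe_add, EReal.coe_eq_coe_iff, sub_sub_cancel,
          toEuclideanLin_apply_nonsing_inv hdet, dualObjective, inner_sub_right,
          real_inner_comm (B p) p]
        ring
  · refine le_iInf fun z' => ?_
    have hFY := inner_le_half_inner_add_half_inner
      (isPositive_toEuclideanLin_iff.mpr hS.posSemidef) (toEuclideanLin_apply_nonsing_inv hdet)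
      (z - z') p
    calc ((dualObjective B z p : ℝ) : EReal)
        ≤ ((2⁻¹ * ⟪toEuclideanLin S (z - z'), z - z'⟫ + ⟪p, z'⟫ : ℝ) : EReal) := by
          rw [EReal.coe_le_coe_iff, dualObjective]
          rw [inner_sub_right] at hFY
          linarith
      _ ≤ _ := by
          rw [EReal.coe_add]
          gcongr
          exact inner_le_hsupp hp z'

theorem stmt16_general {n : ℕ} (S : Matrix (Fin n) (Fin n) ℝ) (hS : S.PosDef)
    (C : Set (EuclideanSpace ℝ (Fin n))) (hCne : C.Nonempty) (hCcl : IsClosed C)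
    (hCco : Convex ℝ C) :
    ∃ p : EuclideanSpace ℝ (Fin n) → EuclideanSpace ℝ (Fin n),
      -- (i) for every `z`, `p z` is the unique minimizer over `C` of
      -- `q ↦ ⟨S⁻¹ (q - S z), q - S z⟩`
      (∀ z : EuclideanSpace ℝ (Fin n), p z ∈ C ∧
        (∀ q ∈ C,
          ⟪Matrix.toEuclideanLin S⁻¹ (p z - Matrix.toEuclideanLin S z),
              p z - Matrix.toEuclideanLin S z⟫ ≤
            ⟪Matrix.toEuclideanLin S⁻¹ (q - Matrix.toEuclideanLin S z),
              q - Matrix.toEuclideanLin S z⟫) ∧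
        (∀ q ∈ C,
          ⟪Matrix.toEuclideanLin S⁻¹ (q - Matrix.toEuclideanLin S z),
              q - Matrix.toEuclideanLin S z⟫ =
            ⟪Matrix.toEuclideanLin S⁻¹ (p z - Matrix.toEuclideanLin S z),
              p z - Matrix.toEuclideanLin S z⟫ → q = p z)) ∧
      -- (ii) value of `ψ`
      (∀ z : EuclideanSpace ℝ (Fin n),
        psi S C z =
          ((2⁻¹ * ⟪Matrix.toEuclideanLin S z, z⟫ -
            2⁻¹ * ⟪Matrix.toEuclideanLin S⁻¹ (p z - Matrix.toEuclideanLin S z),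
              p z - Matrix.toEuclideanLin S z⟫ : ℝ) : EReal)) ∧
      -- (iii) `p` is Lipschitz continuous
      (∃ K : NNReal, LipschitzWith K p) ∧
      -- (iv) `ψ` is (real-valued and) differentiable everywhere with gradient `∇ψ(z) = p z`
      (∃ ψr : EuclideanSpace ℝ (Fin n) → ℝ,
        (∀ z, psi S C z = ((ψr z : ℝ) : EReal)) ∧
        ∀ z, HasGradientAt ψr (p z) z) := by
  set A := toEuclideanLin S
  set B := toEuclideanLin S⁻¹
  have hB : B.IsSymmetric := isSymmetric_toEuclideanLin_iff.mpr hS.inv.isHermitian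
  have hBpos : ∀ x ≠ 0, 0 < ⟪B x, x⟫ := fun _ => hS.inv.inner_toEuclideanLin_self_pos
  obtain ⟨c, hc, hBc⟩ := LinearMap.exists_pos_mul_sq_le_inner hBpos
  have hobj : ∀ z q, ⟪B (q - A z), q - A z⟫ = ⟪A z, z⟫ - 2 * dualObjective B z q := by
    intro z q
    rw [inner_map_sub_sub_eq_sub_dualObjective hB, toEuclideanLin_nonsing_inv_apply
      ((isUnit_iff_isUnit_det S).mp hS.isUnit), real_inner_comm]
  choose p hpC hpmax using exists_isMaxOn_dualObjective hc hBc hCcl hCne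
  have hVI : ∀ z, ∀ q ∈ C, ⟪z - B (p z), q - p z⟫ ≤ 0 := fun z _ hq =>
    inner_sub_map_le_zero_of_isMaxOn hB hCco (hpC z) (hpmax z) hq
  have hLip := lipschitzWith_of_inner_sub_map_le_zero hc hBc hpC hVI
  refine ⟨p, fun z => ⟨hpC z, fun q hq => ?_, fun q hq heq => ?_⟩, fun z => ?_, ⟨_, hLip⟩,
    fun z => dualObjective B z (p z), fun z => psi_eq_dualObjective hS (hpC z) (hVI z),
    fun z => hasGradientAt_of_isMaxOn (k := fun q => 2⁻¹ * ⟪B q, q⟫) hpC hpmax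
      hLip.continuous.continuousAt⟩
  · have hle : dualObjective B z q ≤ dualObjective B z (p z) := hpmax z hq
    rw [hobj, hobj]
    linarith
  · rw [hobj, hobj] at heq
    exact eq_of_dualObjective_eq hB hBpos (hVI z q hq) (by linarith)
  · rw [psi_eq_dualObjective hS (hpC z) (hVI z), hobj, EReal.coe_eq_coe_iff]
    ring

theorem stmt16 {n : ℕ} (hn : 1 ≤ n) (S : Matrix (Fin n) (Fin n) ℝ) (hS : S.PosDef)
    (C : Set (EuclideanSpace ℝ (Fin n))) (hCne : C.Nonempty) (hCcl : IsClosed C)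
    (hCco : Convex ℝ C) (hC0 : (0 : EuclideanSpace ℝ (Fin n)) ∈ C) :
    ∃ p : EuclideanSpace ℝ (Fin n) → EuclideanSpace ℝ (Fin n),
      -- (i) for every `z`, `p z` is the unique minimizer over `C` of
      -- `q ↦ ⟨S⁻¹ (q - S z), q - S z⟩`
      (∀ z : EuclideanSpace ℝ (Fin n), p z ∈ C ∧
        (∀ q ∈ C,
          ⟪Matrix.toEuclideanLin S⁻¹ (p z - Matrix.toEuclideanLin S z),
              p z - Matrix.toEuclideanLin S z⟫ ≤
            ⟪Matrix.toEuclideanLin S⁻¹ (q - Matrix.toEuclideanLin S z),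
              q - Matrix.toEuclideanLin S z⟫) ∧
        (∀ q ∈ C,
          ⟪Matrix.toEuclideanLin S⁻¹ (q - Matrix.toEuclideanLin S z),
              q - Matrix.toEuclideanLin S z⟫ =
            ⟪Matrix.toEuclideanLin S⁻¹ (p z - Matrix.toEuclideanLin S z),
              p z - Matrix.toEuclideanLin S z⟫ → q = p z)) ∧
      -- (ii) value of `ψ`
      (∀ z : EuclideanSpace ℝ (Fin n),
        psi S C z =
          ((2⁻¹ * ⟪Matrix.toEuclideanLin S z, z⟫ -
            2⁻¹ * ⟪Matrix.toEuclideanLin S⁻¹ (p z - Matrix.toEuclideanLin S z),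
              p z - Matrix.toEuclideanLin S z⟫ : ℝ) : EReal)) ∧
      -- (iii) `p` is Lipschitz continuous
      (∃ K : NNReal, LipschitzWith K p) ∧
      -- (iv) `ψ` is (real-valued and) differentiable everywhere with gradient `∇ψ(z) = p z`
      (∃ ψr : EuclideanSpace ℝ (Fin n) → ℝ,
        (∀ z, psi S C z = ((ψr z : ℝ) : EReal)) ∧
        ∀ z, HasGradientAt ψr (p z) z) :=
  stmt16_general S hS C hCne hCcl hCco
end

section
/- Let n ≥ 1, let S be a symmetric positive definite real n×n matrix, and let C ⊆ ℝⁿ be a nonempty closed convex set with 0 ∈ C. Then for all u, z ∈ ℝⁿ, sup_{q ∈ C} ( ⟨q, u⟩ − ¼ ⟨S⁻¹(S z + q), S z + q⟩ ) ≥ ψ(u) − ½ ⟨S z, z⟩. -/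
/-! The maximiser `q` over `C` of the coercive concave function `q ↦ ⟪q, u⟫ - ½⟪S⁻¹q, q⟫`
satisfies the variational inequality `⟪p - q, u - S⁻¹q⟫ ≤ 0` for `p ∈ C` (Fermat's rule along
segments of `C`). Hence `v = u - S⁻¹q` has `h(v) = ⟪q, v⟫`, and testing the infimum defining
`ψ(u)` at `z' = v` gives `ψ(u) ≤ ⟪q, u⟫ - ½⟪S⁻¹q, q⟫`. At this same `q`, the claim then reduces
to `¼⟪S⁻¹(Sz + q), Sz + q⟫ ≤ ½⟪Sz, z⟫ + ½⟪S⁻¹q, q⟫`, the parallelogram law for the form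
`⟪S⁻¹·, ·⟫` with the nonnegative term `¼⟪S⁻¹(Sz - q), Sz - q⟫` dropped. -/

open Matrix
open scoped RealInnerProductSpace

open Filter

section Quadratic

variable {E : Type*} [NormedAddCommGroup E] [InnerProductSpace ℝ E]

theorem LinearMap.inner_map_add_add_le (B : E →ₗ[ℝ] E) (hB : ∀ x, 0 ≤ ⟪B x, x⟫) (a b : E) :
    ⟪B (a + b), a + b⟫ ≤ 2 * ⟪B a, a⟫ + 2 * ⟪B b, b⟫ := by
  have h := hB (a - b)
  simp only [map_add, map_sub, inner_add_left, inner_add_right, inner_sub_left,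
    inner_sub_right] at h ⊢
  linarith

variable [FiniteDimensional ℝ E]

theorem LinearMap.exists_pos_mul_norm_sq_le_inner_self (A : E →ₗ[ℝ] E)
    (hA : ∀ x ≠ 0, 0 < ⟪A x, x⟫) : ∃ μ > 0, ∀ x, μ * ‖x‖ ^ 2 ≤ ⟪A x, x⟫ := by
  rcases subsingleton_or_nontrivial E with hE | hE
  · exact ⟨1, one_pos, fun x => by simp [Subsingleton.elim x 0]⟩
  have hcont : Continuous fun x => ⟪A x, x⟫ :=
    A.continuous_of_finiteDimensional.inner continuous_id
  obtain ⟨x₀, hx₀, hmin⟩ := (isCompact_sphere (0 : E) 1).exists_isMinOn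
    (NormedSpace.sphere_nonempty.2 zero_le_one) hcont.continuousOn
  refine ⟨⟪A x₀, x₀⟫, hA x₀ (ne_zero_of_mem_unit_sphere ⟨x₀, hx₀⟩), fun x => ?_⟩
  rcases eq_or_ne x 0 with rfl | hx
  · simp
  have hx' : 0 < ‖x‖ := norm_pos_iff.2 hx
  have hmin_x : ⟪A x₀, x₀⟫ ≤ ⟪A (‖x‖⁻¹ • x), ‖x‖⁻¹ • x⟫ :=
    hmin (show ‖x‖⁻¹ • x ∈ Metric.sphere (0 : E) 1 by simp [norm_smul, hx'.ne'])
  simp only [map_smul, real_inner_smul_left, real_inner_smul_right] at hmin_x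
  rw [← le_div_iff₀ (by positivity)]
  exact hmin_x.trans_eq (by ring)

theorem LinearMap.tendsto_inner_sub_half_inner_self_cocompact (A : E →ₗ[ℝ] E)
    (hA : ∀ x ≠ 0, 0 < ⟪A x, x⟫) (u : E) :
    Tendsto (fun q => ⟪q, u⟫ - 2⁻¹ * ⟪A q, q⟫) (cocompact E) atBot := by
  obtain ⟨μ, hμ, hAμ⟩ := A.exists_pos_mul_norm_sq_le_inner_self hA
  have hbound : Tendsto (fun q : E => ‖q‖ * (‖u‖ + -(2⁻¹ * μ) * ‖q‖)) (cocompact E) atBot :=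
    tendsto_norm_cocompact_atTop.atTop_mul_atBot₀ <| tendsto_atBot_add_const_left _ _ <|
      tendsto_norm_cocompact_atTop.const_mul_atTop_of_neg (by linarith)
  refine tendsto_atBot_mono (fun q => ?_) hbound
  nlinarith [real_inner_le_norm q u, hAμ q]

theorem LinearMap.exists_isMaxOn_inner_sub_half_inner_self (A : E →ₗ[ℝ] E)
    (hA : ∀ x ≠ 0, 0 < ⟪A x, x⟫) (u : E) {C : Set E} (hCcl : IsClosed C)
    (hCne : C.Nonempty) :
    ∃ q ∈ C, IsMaxOn (fun q => ⟪q, u⟫ - 2⁻¹ * ⟪A q, q⟫) C q := by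
  obtain ⟨q₀, hq₀⟩ := hCne
  refine ContinuousOn.exists_isMaxOn' (Continuous.continuousOn ?_) hCcl hq₀ <|
    ((A.tendsto_inner_sub_half_inner_self_cocompact hA u).eventually
      (eventually_le_atBot _)).filter_mono inf_le_left
  exact (continuous_id.inner continuous_const).sub
    (continuous_const.mul (A.continuous_of_finiteDimensional.inner continuous_id))

theorem LinearMap.IsSymmetric.inner_sub_nonpos_of_isMaxOn {A : E →ₗ[ℝ] E}
    (hA : A.IsSymmetric) {C : Set E} (hC : Convex ℝ C) {u q : E} (hq : q ∈ C)
    (hmax : IsMaxOn (fun q => ⟪q, u⟫ - 2⁻¹ * ⟪A q, q⟫) C q) {p : E} (hp : p ∈ C) :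
    ⟪p - q, u - A q⟫ ≤ 0 := by
  let A' : E →L[ℝ] E := LinearMap.toContinuousLinearMap A
  have hA' : (A' : E →ₗ[ℝ] E).IsSymmetric := hA
  have hderiv : HasFDerivAt (fun q => ⟪q, u⟫ - 2⁻¹ * ⟪A q, q⟫) (innerSL ℝ (u - A q)) q := by
    have := ((innerSL ℝ u).hasFDerivAt (x := q)).sub
      ((hA'.hasStrictFDerivAt_reApplyInnerSelf q).hasFDerivAt.const_mul 2⁻¹)
    refine (this.congr_fderiv ?_).congr_of_eventuallyEq (Eventually.of_forall fun x => ?_)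
    · ext x
      simp [A']
    · simp [A', real_inner_comm, ContinuousLinearMap.reApplyInnerSelf_apply]
  have := hmax.localize.hasFDerivWithinAt_nonpos hderiv.hasFDerivWithinAt
    (sub_mem_posTangentConeAt_of_segment_subset (hC.segment_subset hq hp))
  simpa [real_inner_comm, inner_sub_right, inner_sub_left] using this

theorem LinearMap.IsSymmetric.exists_mem_forall_inner_sub_nonpos {A : E →ₗ[ℝ] E}
    (hA : A.IsSymmetric) (hApos : ∀ x ≠ 0, 0 < ⟪A x, x⟫) (u : E) {C : Set E}
    (hCcl : IsClosed C) (hCco : Convex ℝ C) (hCne : C.Nonempty) :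
    ∃ q ∈ C, ∀ p ∈ C, ⟪p - q, u - A q⟫ ≤ 0 := by
  obtain ⟨q, hq, hmax⟩ := A.exists_isMaxOn_inner_sub_half_inner_self hApos u hCcl hCne
  exact ⟨q, hq, fun p hp => hA.inner_sub_nonpos_of_isMaxOn hCco hq hmax hp⟩

end Quadratic

section Matrix

variable {ι : Type*} [Fintype ι] [DecidableEq ι]

theorem Matrix.toEuclideanLin_apply_toEuclideanLin_apply_of_mul_eq_one {𝕜 : Type*} [RCLike 𝕜]
    {A B : Matrix ι ι 𝕜} (h : A * B = 1) (x : EuclideanSpace 𝕜 ι) :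
    toEuclideanLin A (toEuclideanLin B x) = x := by
  rw [← LinearMap.comp_apply, ← toLpLin_mul_same, h, toLpLin_one, LinearMap.id_apply]

theorem Matrix.PosDef.inner_toEuclideanLin_self_pos_s19 {A : Matrix ι ι ℝ} (hA : A.PosDef)
    {x : EuclideanSpace ℝ ι} (hx : x ≠ 0) : 0 < ⟪toEuclideanLin A x, x⟫ := by
  rw [real_inner_comm, EuclideanSpace.inner_eq_star_dotProduct, ofLp_toLpLin, toLin'_apply,
    dotProduct_comm]
  exact hA.dotProduct_mulVec_pos (by simpa using hx)

theorem Matrix.PosDef.inner_inv_add_le {S : Matrix ι ι ℝ} (hS : S.PosDef)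
    (z q : EuclideanSpace ℝ ι) :
    4⁻¹ * ⟪toEuclideanLin S⁻¹ (toEuclideanLin S z + q), toEuclideanLin S z + q⟫ ≤
      2⁻¹ * ⟪toEuclideanLin S z, z⟫ + 2⁻¹ * ⟪toEuclideanLin S⁻¹ q, q⟫ := by
  have h := (toEuclideanLin S⁻¹).inner_map_add_add_le
    (isPositive_toEuclideanLin_iff.2 hS.inv.posSemidef).inner_nonneg_left (toEuclideanLin S z) q
  rw [toEuclideanLin_apply_toEuclideanLin_apply_of_mul_eq_one
    (nonsing_inv_mul _ hS.det_pos.ne'.isUnit), real_inner_comm (toEuclideanLin S z) z] at h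
  linarith

end Matrix

theorem hsupp_eq_of_isMaxOn {n : ℕ} {C : Set (EuclideanSpace ℝ (Fin n))}
    {q v : EuclideanSpace ℝ (Fin n)} (hq : q ∈ C) (hmax : IsMaxOn (fun p => ⟪p, v⟫) C q) :
    hsupp C v = ((⟪q, v⟫ : ℝ) : EReal) :=
  le_antisymm (iSup₂_le fun _ hp => EReal.coe_le_coe_iff.2 (hmax hp))
    (le_iSup₂ (f := fun p (_ : p ∈ C) => ((⟪p, v⟫ : ℝ) : EReal)) q hq)

theorem psi_le_of_forall_inner_sub_nonpos {n : ℕ} {S : Matrix (Fin n) (Fin n) ℝ}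
    (hS : IsUnit S.det) {C : Set (EuclideanSpace ℝ (Fin n))} {u q : EuclideanSpace ℝ (Fin n)}
    (hq : q ∈ C) (hvar : ∀ p ∈ C, ⟪p - q, u - toEuclideanLin S⁻¹ q⟫ ≤ 0) :
    psi S C u ≤ ((⟪q, u⟫ - 2⁻¹ * ⟪toEuclideanLin S⁻¹ q, q⟫ : ℝ) : EReal) := by
  set v := u - toEuclideanLin S⁻¹ q
  have hsupp_v : hsupp C v = ((⟪q, v⟫ : ℝ) : EReal) :=
    hsupp_eq_of_isMaxOn hq fun p hp => by
      have := hvar p hp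
      rw [inner_sub_left] at this
      exact sub_nonpos.1 this
  calc psi S C u
      ≤ ((2⁻¹ * ⟪toEuclideanLin S (u - v), u - v⟫ : ℝ) : EReal) + hsupp C v := iInf_le _ v
    _ = ((⟪q, u⟫ - 2⁻¹ * ⟪toEuclideanLin S⁻¹ q, q⟫ : ℝ) : EReal) := by
      rw [hsupp_v, ← EReal.coe_add, sub_sub_cancel,
        toEuclideanLin_apply_toEuclideanLin_apply_of_mul_eq_one (mul_nonsing_inv _ hS),
        inner_sub_right, real_inner_comm q]
      ring_nf

theorem stmt19_general {n : ℕ} (S : Matrix (Fin n) (Fin n) ℝ) (hS : S.PosDef)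
    (C : Set (EuclideanSpace ℝ (Fin n))) (hCne : C.Nonempty) (hCcl : IsClosed C)
    (hCco : Convex ℝ C)
    (u z : EuclideanSpace ℝ (Fin n)) :
    psi S C u - ((2⁻¹ * ⟪Matrix.toEuclideanLin S z, z⟫ : ℝ) : EReal) ≤
      ⨆ q ∈ C,
        ((⟪q, u⟫ - 4⁻¹ * ⟪Matrix.toEuclideanLin S⁻¹ (Matrix.toEuclideanLin S z + q),
            Matrix.toEuclideanLin S z + q⟫ : ℝ) : EReal) := by
  set T := toEuclideanLin S
  set Ti := toEuclideanLin S⁻¹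
  obtain ⟨q, hqC, hvar⟩ :=
    (isSymmetric_toEuclideanLin_iff.2 hS.inv.isHermitian).exists_mem_forall_inner_sub_nonpos
      (fun _ hx => hS.inv.inner_toEuclideanLin_self_pos_s19 hx) u hCcl hCco hCne
  have hpsi := psi_le_of_forall_inner_sub_nonpos hS.det_pos.ne'.isUnit hqC hvar
  have hquad := hS.inner_inv_add_le z q
  calc psi S C u - ((2⁻¹ * ⟪T z, z⟫ : ℝ) : EReal)
      ≤ ((⟪q, u⟫ - 2⁻¹ * ⟪Ti q, q⟫ : ℝ) : EReal) - ((2⁻¹ * ⟪T z, z⟫ : ℝ) : EReal) :=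
        EReal.sub_le_sub hpsi le_rfl
    _ ≤ ((⟪q, u⟫ - 4⁻¹ * ⟪Ti (T z + q), T z + q⟫ : ℝ) : EReal) := by
      rw [← EReal.coe_sub, EReal.coe_le_coe_iff]
      linarith
    _ ≤ _ := le_iSup₂ (f := fun q (_ : q ∈ C) =>
        ((⟪q, u⟫ - 4⁻¹ * ⟪Ti (T z + q), T z + q⟫ : ℝ) : EReal)) q hqC

theorem stmt19 {n : ℕ} (hn : 1 ≤ n) (S : Matrix (Fin n) (Fin n) ℝ) (hS : S.PosDef)
    (C : Set (EuclideanSpace ℝ (Fin n))) (hCne : C.Nonempty) (hCcl : IsClosed C)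
    (hCco : Convex ℝ C) (hC0 : (0 : EuclideanSpace ℝ (Fin n)) ∈ C)
    (u z : EuclideanSpace ℝ (Fin n)) :
    psi S C u - ((2⁻¹ * ⟪Matrix.toEuclideanLin S z, z⟫ : ℝ) : EReal) ≤
      ⨆ q ∈ C,
        ((⟪q, u⟫ - 4⁻¹ * ⟪Matrix.toEuclideanLin S⁻¹ (Matrix.toEuclideanLin S z + q),
            Matrix.toEuclideanLin S z + q⟫ : ℝ) : EReal) :=
  stmt19_general S hS C hCne hCcl hCco u z
end
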